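/- arXiv:1311.5634 — 3 statements merged into one kernel-verified Lean document; each statement's English description precedes it below -/
import Mathlib

section
/- Among any collection of a ≥ 2 binary vectors of length n ≥ 1 whose weights sum to a·w (so the average weight is w), there exist two distinct vectors whose inner product is at least w(aw/n − 1)/(a − 1) = w²/n − w(n−w)/(n(a−1)). -/
/-- Brouwer–Koolen inproduct bound: among `a ≥ 2` binary vectors of length `n ≥ 1`
whose weights sum to `a·w`, two distinct vectors have inner product at least
`w(aw/n − 1)/(a−1)`. -/
theorem inproduct_bound (n a : ℕ) (ha : 2 ≤ a) (hn : 1 ≤ n)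
    (f : Fin a → Fin n → Bool) (w : ℝ)
    (hw : ∑ i, ((Finset.univ.filter (fun j => f i j = true)).card : ℝ) = a * w) :
    ∃ i j : Fin a, i ≠ j ∧
      ((Finset.univ.filter (fun t => f i t = true ∧ f j t = true)).card : ℝ) ≥
        w * (a * w / n - 1) / (a - 1) := by
  classical
  have hn0 : (0:ℝ) < n := by exact_mod_cast hn
  have ha1 : (1:ℝ) < a := by exact_mod_cast lt_of_lt_of_le one_lt_two (by exact_mod_cast ha)
  set ip : Fin a → Fin a → ℝ := fun i j =>
    ((Finset.univ.filter (fun t => f i t = true ∧ f j t = true)).card : ℝ) with hip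
  set ind : Fin a → Fin n → ℝ := fun i t => if f i t = true then (1:ℝ) else 0 with hindd
  set c : Fin n → ℝ := fun t => ∑ i, ind i t with hc
  have hcsum : ∑ t, c t = a * w := by
    rw [← hw, Finset.sum_comm]
    refine Finset.sum_congr rfl fun i _ => ?_
    rw [Finset.card_filter]
    push_cast
    exact Finset.sum_congr rfl fun t _ => by by_cases h : f i t = true <;> simp [hindd, h]
  have hind : ∀ i j, ip i j = ∑ t, ind i t * ind j t := by
    intro i j
    simp only [hip, Finset.card_filter]
    push_cast
    refine Finset.sum_congr rfl fun t _ => ?_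
    by_cases h1 : f i t = true <;> by_cases h2 : f j t = true <;> simp [hindd, h1, h2]
  have hsq : ∑ i, ∑ j, ip i j = ∑ t, (c t)^2 := by
    have h1 : ∀ i, ∑ j, ip i j = ∑ t, ind i t * c t := by
      intro i
      simp only [hind]
      rw [Finset.sum_comm]
      exact Finset.sum_congr rfl fun t _ => by rw [← Finset.mul_sum]
    simp only [h1]
    rw [Finset.sum_comm]
    exact Finset.sum_congr rfl fun t _ => by rw [sq, ← Finset.sum_mul]
  have hdiag : ∑ i, ip i i = a * w := by
    rw [← hw]
    refine Finset.sum_congr rfl fun i _ => ?_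
    simp [hip, and_self]
  -- Cauchy-Schwarz / Chebyshev
  have hcs : (a * w)^2 ≤ n * ∑ t, (c t)^2 := by
    have := sq_sum_le_card_mul_sum_sq (s := (Finset.univ : Finset (Fin n))) (f := c)
    simpa [hcsum] using this
  -- off-diagonal sum
  set od := (Finset.univ : Finset (Fin a)).offDiag with hod
  have hsplit : (∑ i, ∑ j, ip i j) = (∑ i, ip i i) + ∑ p ∈ od, ip p.1 p.2 := by
    rw [← Finset.sum_product']
    rw [← Finset.diag_union_offDiag (s := (Finset.univ : Finset (Fin a)))]
    rw [Finset.sum_union (Finset.disjoint_diag_offDiag _)]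
    congr 1
    rw [Finset.sum_diag]
  have hS : (a*w)^2 / n - a * w ≤ ∑ p ∈ od, ip p.1 p.2 := by
    have h1 : (a*w)^2 / n ≤ ∑ t, (c t)^2 := by
      rw [div_le_iff₀ hn0]; linarith [hcs]
    have := hsplit
    rw [hsq, hdiag] at this
    linarith
  have hcard : (od.card : ℝ) = a * (a - 1) := by
    rw [hod, Finset.offDiag_card]
    simp only [Finset.card_univ, Fintype.card_fin]
    have h1 : 1 ≤ a := le_trans one_le_two ha
    push_cast [Nat.cast_sub (Nat.le_mul_of_pos_left a (by omega) : a ≤ a * a)]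
    ring
  set B : ℝ := w * (a * w / n - 1) / (a - 1) with hB
  have hBsum : ∑ _p ∈ od, B ≤ ∑ p ∈ od, ip p.1 p.2 := by
    rw [Finset.sum_const, nsmul_eq_mul, hcard]
    have hkey : a * (a - 1 : ℝ) * B = (a*w)^2 / n - a * w := by
      have h1 : (a:ℝ) - 1 ≠ 0 := by linarith
      have h2 : (n:ℝ) ≠ 0 := ne_of_gt hn0
      rw [hB]
      field_simp
    rw [hkey]
    exact hS
  have hne : od.Nonempty := by
    refine ⟨(⟨0, by omega⟩, ⟨1, by omega⟩), ?_⟩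
    rw [hod, Finset.mem_offDiag]
    refine ⟨Finset.mem_univ _, Finset.mem_univ _, ?_⟩
    intro h; simp [Fin.ext_iff] at h
  obtain ⟨p, hp, hle⟩ := Finset.exists_le_of_sum_le hne hBsum
  rw [hod, Finset.mem_offDiag] at hp
  exact ⟨p.1, p.2, hp.2.2, hle⟩
end

section
/- Let G be a connected strongly regular graph with parameters (v,k,λ,μ) satisfying k − 2λ − 1 > 0, and let C be a clique of G with q ≥ 3 vertices. Then |N(C)| > 2k − λ − 2, where N(C) is the set of vertices outside C adjacent to some vertex of C. -/
/-!
Pick three vertices `x, y, z` of the clique `C`, with `q = |C|`. Each has `k - (q - 1)` neighbours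
outside `C`, and any two of them, being adjacent, have `λ - (q - 2)` common neighbours outside `C`.
By inclusion–exclusion the neighbourhood of `C` has at least `3(k - q + 1) - 3(λ - q + 2) = 3k - 3λ - 3`
vertices, and `3k - 3λ - 3 > 2k - λ - 2` is exactly `k - 2λ - 1 > 0`.
-/

open Finset SimpleGraph

theorem Finset.card_add_card_add_card_le {α : Type*} [DecidableEq α] (A B D : Finset α) :
    #A + #B + #D ≤ #(A ∪ B ∪ D) + #(A ∩ B) + #(A ∩ D) + #(B ∩ D) := by
  have hABD := card_union_add_card_inter (A ∪ B) D
  have hAB := card_union_add_card_inter A B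
  have hcross : #((A ∪ B) ∩ D) ≤ #(A ∩ D) + #(B ∩ D) := by
    rw [union_inter_distrib_right]
    exact card_union_le _ _
  omega

namespace SimpleGraph

variable {V : Type*} [Fintype V] [DecidableEq V] {G : SimpleGraph V} [DecidableRel G.Adj]
  {C : Finset V}

theorem IsClique.neighborFinset_inter_eq_erase (hC : G.IsClique (C : Set V)) {w : V}
    (hw : w ∈ C) : G.neighborFinset w ∩ C = C.erase w := by
  ext u
  simp only [mem_inter, mem_neighborFinset, mem_erase]
  exact ⟨fun ⟨hadj, hu⟩ => ⟨hadj.ne', hu⟩, fun ⟨hne, hu⟩ => ⟨hC hw hu hne.symm, hu⟩⟩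

theorem IsClique.card_neighborFinset_sdiff_add (hC : G.IsClique (C : Set V)) {w : V}
    (hw : w ∈ C) : #(G.neighborFinset w \ C) + (#C - 1) = G.degree w := by
  have hsplit := card_inter_add_card_sdiff (G.neighborFinset w) C
  rw [hC.neighborFinset_inter_eq_erase hw, card_erase_of_mem hw, card_neighborFinset_eq_degree]
    at hsplit
  omega

theorem IsClique.card_neighborFinset_sdiff_inter_add (hC : G.IsClique (C : Set V)) {a b : V}
    (ha : a ∈ C) (hb : b ∈ C) (hab : a ≠ b) :
    #((G.neighborFinset a \ C) ∩ (G.neighborFinset b \ C)) + (#C - 2) =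
      #(G.neighborFinset a ∩ G.neighborFinset b) := by
  have houter : (G.neighborFinset a \ C) ∩ (G.neighborFinset b \ C) =
      (G.neighborFinset a ∩ G.neighborFinset b) \ C := by
    ext u
    simp only [mem_inter, mem_sdiff]
    tauto
  have hinner : G.neighborFinset a ∩ G.neighborFinset b ∩ C = (C.erase a).erase b := by
    rw [inter_assoc, hC.neighborFinset_inter_eq_erase hb, inter_erase,
      hC.neighborFinset_inter_eq_erase ha]
  have hsplit := card_inter_add_card_sdiff (G.neighborFinset a ∩ G.neighborFinset b) C
  rw [hinner, card_erase_of_mem (mem_erase.mpr ⟨hab.symm, hb⟩), card_erase_of_mem ha] at hsplit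
  rw [houter]
  omega

theorem IsSRGWith.card_neighborFinset_inter_of_adj {n k ℓ μ : ℕ} (h : G.IsSRGWith n k ℓ μ)
    {a b : V} (hab : G.Adj a b) : #(G.neighborFinset a ∩ G.neighborFinset b) = ℓ := by
  rw [← h.of_adj a b hab, ← Set.toFinset_card]
  congr 1
  ext u
  simp [mem_commonNeighbors]

theorem neighborFinset_sdiff_subset_filter {w : V} (hw : w ∈ C) :
    G.neighborFinset w \ C ⊆ univ.filter (fun u : V => u ∉ C ∧ ∃ w ∈ C, G.Adj u w) := by
  intro u hu
  obtain ⟨hadj, hu⟩ := mem_sdiff.mp hu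
  exact mem_filter.mpr ⟨mem_univ u, hu, w, hw, (mem_neighborFinset _ _ _).mp hadj |>.symm⟩

end SimpleGraph

theorem srg_clique_neighborhood_general {V : Type*} [Fintype V] [DecidableEq V]
    (G : SimpleGraph V) [DecidableRel G.Adj] (v k l m : ℕ)
    (hG : G.IsSRGWith v k l m)
    (hkl : (k : ℤ) - 2 * (l : ℤ) - 1 > 0)
    (C : Finset V) (hC : G.IsClique (C : Set V)) (hq : 3 ≤ C.card) :
    ((Finset.univ.filter (fun u : V =>
        u ∉ C ∧ ∃ w ∈ C, G.Adj u w)).card : ℤ) > 2 * (k : ℤ) - (l : ℤ) - 2 := by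
  obtain ⟨x, hx, y, hy, z, hz, hxy, hxz, hyz⟩ := two_lt_card.mp hq
  have hdeg {w : V} (hw : w ∈ C) : #(G.neighborFinset w \ C) + (#C - 1) = k := by
    rw [hC.card_neighborFinset_sdiff_add hw, hG.regular w]
  have hcommon {a b : V} (ha : a ∈ C) (hb : b ∈ C) (hab : a ≠ b) :
      #((G.neighborFinset a \ C) ∩ (G.neighborFinset b \ C)) + (#C - 2) = l := by
    rw [hC.card_neighborFinset_sdiff_inter_add ha hb hab,
      hG.card_neighborFinset_inter_of_adj (hC ha hb hab)]
  have hunion := card_le_card <| union_subset (union_subset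
    (neighborFinset_sdiff_subset_filter (G := G) hx)
    (neighborFinset_sdiff_subset_filter hy)) (neighborFinset_sdiff_subset_filter hz)
  have := card_add_card_add_card_le (G.neighborFinset x \ C) (G.neighborFinset y \ C)
    (G.neighborFinset z \ C)
  have := hdeg hx; have := hdeg hy; have := hdeg hz
  have := hcommon hx hy hxy; have := hcommon hx hz hxz; have := hcommon hy hz hyz
  omega

/-- In a connected strongly regular graph with parameters `(v,k,λ,μ)` satisfying
`k − 2λ − 1 > 0`, the neighborhood of any clique `C` with at least 3 vertices has
more than `2k − λ − 2` vertices. -/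
theorem srg_clique_neighborhood {V : Type*} [Fintype V] [DecidableEq V]
    (G : SimpleGraph V) [DecidableRel G.Adj] (v k l m : ℕ)
    (hG : G.IsSRGWith v k l m) (hconn : G.Connected)
    (hkl : (k : ℤ) - 2 * (l : ℤ) - 1 > 0)
    (C : Finset V) (hC : G.IsClique (C : Set V)) (hq : 3 ≤ C.card) :
    ((Finset.univ.filter (fun u : V =>
        u ∉ C ∧ ∃ w ∈ C, G.Adj u w)).card : ℤ) > 2 * (k : ℤ) - (l : ℤ) - 2 :=
  srg_clique_neighborhood_general G v k l m hG hkl C hC hq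
end

section
/- Let G be a k-regular graph on v vertices with adjacency matrix eigenvalues k = θ₁ ≥ θ₂ ≥ … ≥ θ_v, and let A be a subset of vertices with a = |A|. Then the number of edges between A and its complement satisfies e(A, Aᶜ) ≥ (k − θ₂)·a·(v − a)/v. -/
/-!
Centre the indicator of `A`: `x = 1_A - (|A| / v) 𝟙` is orthogonal to `𝟙`, and the Laplacian
quadratic form, which on `1_A` counts the boundary edges, does not see the shift by a constant.
For a `k`-regular graph that form is `k ‖x‖² - xᵀ A x ≥ (k - θ₂) ‖x‖²`, and
`‖x‖² = |A| (v - |A|) / v`.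
-/

open Matrix Finset

namespace SimpleGraph

variable {V R : Type*} [Fintype V] [DecidableEq V] (G : SimpleGraph V) [DecidableRel G.Adj]

theorem dotProduct_lapMatrix_mulVec [CommRing R] (x : V → R) :
    x ⬝ᵥ (G.lapMatrix R *ᵥ x) = ∑ i, ∑ j, if G.Adj i j then x i * (x i - x j) else 0 := by
  refine sum_congr rfl fun i _ => ?_
  rw [lapMatrix_mulVec_apply, G.degree_eq_sum_if_adj (R := R), neighborFinset_eq_filter,
    sum_filter, sum_mul, ← sum_sub_distrib, mul_sum]
  refine sum_congr rfl fun j _ => ?_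
  split_ifs <;> ring

theorem card_adj_mem_notMem_eq_dotProduct_lapMatrix_mulVec [CommRing R] (A : Finset V) :
    (#{p : V × V | p.1 ∈ A ∧ p.2 ∉ A ∧ G.Adj p.1 p.2} : R) =
      (A : Set V).indicator 1 ⬝ᵥ (G.lapMatrix R *ᵥ (A : Set V).indicator 1) := by
  rw [dotProduct_lapMatrix_mulVec, card_filter, Nat.cast_sum, Fintype.sum_prod_type]
  refine sum_congr rfl fun i _ => sum_congr rfl fun j _ => ?_
  by_cases hi : i ∈ A <;> by_cases hj : j ∈ A <;> by_cases hij : G.Adj i j <;> simp [*]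

theorem dotProduct_lapMatrix_mulVec_sub_const [Field R] [CharZero R] (x : V → R) (c : R) :
    (fun i => x i - c) ⬝ᵥ (G.lapMatrix R *ᵥ fun i => x i - c) =
      x ⬝ᵥ (G.lapMatrix R *ᵥ x) := by
  simp only [← toLinearMap₂'_apply', lapMatrix_toLinearMap₂', sub_sub_sub_cancel_right]

variable {G} in
theorem IsRegularOfDegree.dotProduct_lapMatrix_mulVec [CommRing R] {k : ℕ}
    (hreg : G.IsRegularOfDegree k) (x : V → R) :
    x ⬝ᵥ (G.lapMatrix R *ᵥ x) = k * (x ⬝ᵥ x) - x ⬝ᵥ (G.adjMatrix R *ᵥ x) := by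
  rw [lapMatrix, sub_mulVec, dotProduct_sub, dotProduct_mulVec_degMatrix]
  simp only [hreg _, dotProduct, mul_sum, mul_assoc]

end SimpleGraph

namespace Finset

variable {V R : Type*} [Fintype V] [DecidableEq V]

variable (R) in
noncomputable def centeredIndicator [DivisionRing R] (A : Finset V) : V → R :=
  fun i => (A : Set V).indicator 1 i - #A / Fintype.card V

theorem sum_centeredIndicator [Field R] [CharZero R] (A : Finset V) :
    ∑ i, A.centeredIndicator R i = 0 := by
  cases isEmpty_or_nonempty V
  · simp
  simp only [centeredIndicator]
  rw [sum_sub_distrib, sum_const, card_univ, nsmul_eq_mul,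
    mul_div_cancel₀ _ (Nat.cast_ne_zero.2 Fintype.card_ne_zero)]
  simp [Set.indicator_apply]

theorem centeredIndicator_dotProduct_self [Field R] [CharZero R] (A : Finset V) :
    A.centeredIndicator R ⬝ᵥ A.centeredIndicator R =
      #A * (Fintype.card V - #A) / Fintype.card V := by
  cases isEmpty_or_nonempty V
  · simp [dotProduct]
  set c : R := #A / Fintype.card V
  have hsq : ∀ i, A.centeredIndicator R i * A.centeredIndicator R i =
      (1 - 2 * c) * (A : Set V).indicator 1 i + c ^ 2 := by
    intro i
    by_cases hi : i ∈ A <;> simp [centeredIndicator, c, hi] <;> ring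
  simp only [dotProduct, hsq, sum_add_distrib, ← mul_sum, sum_const, card_univ, nsmul_eq_mul]
  simp [Set.indicator_apply, c]
  field_simp
  ring

end Finset

/-- Spectral edge-isoperimetric inequality: if `G` is `k`-regular on `v` vertices and
`θ₂` bounds the Rayleigh quotient of the adjacency matrix on the space orthogonal to
the all-ones vector (i.e. `θ₂` is at least the second-largest adjacency eigenvalue),
then `e(A, Aᶜ) ≥ (k − θ₂)·|A|·(v − |A|)/v`. -/
theorem edge_isoperimetric_inequality {V : Type*} [Fintype V] [DecidableEq V]
    (G : SimpleGraph V) [DecidableRel G.Adj] (v k : ℕ)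
    (hv : Fintype.card V = v) (hreg : G.IsRegularOfDegree k) (θ₂ : ℝ)
    (hθ : ∀ x : V → ℝ, (∑ u, x u) = 0 →
      x ⬝ᵥ (G.adjMatrix ℝ *ᵥ x) ≤ θ₂ * (x ⬝ᵥ x))
    (A : Finset V) :
    (((Finset.univ.filter
        (fun p : V × V => p.1 ∈ A ∧ p.2 ∉ A ∧ G.Adj p.1 p.2)).card : ℝ)) ≥
      ((k : ℝ) - θ₂) * A.card * ((v : ℝ) - A.card) / v := by
  set x := A.centeredIndicator ℝ
  calc (#{p : V × V | p.1 ∈ A ∧ p.2 ∉ A ∧ G.Adj p.1 p.2} : ℝ)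
      = x ⬝ᵥ (G.lapMatrix ℝ *ᵥ x) := by
        rw [G.card_adj_mem_notMem_eq_dotProduct_lapMatrix_mulVec,
          ← G.dotProduct_lapMatrix_mulVec_sub_const _ ((#A : ℝ) / Fintype.card V)]
        rfl
    _ = k * (x ⬝ᵥ x) - x ⬝ᵥ (G.adjMatrix ℝ *ᵥ x) := hreg.dotProduct_lapMatrix_mulVec x
    _ ≥ (k - θ₂) * (x ⬝ᵥ x) := by linarith [hθ x (sum_centeredIndicator A)]
    _ = (k - θ₂) * #A * (v - #A) / v := by
        rw [centeredIndicator_dotProduct_self, hv]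
        ring
end
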